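/- arXiv:1812.08905 — 2 statements merged into one kernel-verified Lean document; each statement's English description precedes it below -/
import Mathlib

section
/- Let 0 ≤ r and k ≥ 0 be integers with r + k < N, and let W ∈ W_r. Then A₋A₊^{k+1}W = m(r,k)·A₊^{k}W. -/
/-!
`A₋` is the adjoint of `A₊`, so orthogonality of `W` to the range of `A₊` on `Σ_{r-1}` means
`A₋W = 0`. On functions supported on `Σ_n` the commutator satisfies
`A₋A₊ = A₊A₋ + (N - 2n)`, since a set of size `n` has `N - n` one-point extensions and `n`
one-point restrictions. Pushing `A₋` through the powers of `A₊` one step at a time therefore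
picks up the terms `N - 2(r + j)`, `j = 0, …, k`, of `m(r,k)`.
-/

open Finset

/-- Outer adjacency operator on vertex functions of the Boolean hypercube `B_N`:
`(A₊V)(S) = Σ_{s∈S} V(S∖{s})`. -/
def Aplus (N : ℕ) (V : Finset (Fin N) → ℝ) : Finset (Fin N) → ℝ :=
  fun S => ∑ s ∈ S, V (S.erase s)

/-- Inner adjacency operator: `(A₋V)(R) = Σ_{b∉R} V(R∪{b})`. -/
def Aminus (N : ℕ) (V : Finset (Fin N) → ℝ) : Finset (Fin N) → ℝ :=
  fun R => ∑ b ∈ Rᶜ, V (insert b R)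

/-- Adjacency operator `A = A₊ + A₋`. -/
def Adj (N : ℕ) (V : Finset (Fin N) → ℝ) : Finset (Fin N) → ℝ :=
  fun S => Aplus N V S + Aminus N V S

/-- Graph Laplacian `L = N·I − A`. -/
def Lap (N : ℕ) (V : Finset (Fin N) → ℝ) : Finset (Fin N) → ℝ :=
  fun S => (N : ℝ) * V S - Adj N V S

/-- Inner product `⟨V,U⟩ = Σ_S V(S)U(S)` on vertex functions. -/
def inner' (N : ℕ) (V U : Finset (Fin N) → ℝ) : ℝ :=
  ∑ S : Finset (Fin N), V S * U S

/-- `V` is supported on the Hamming sphere `Σ_r` (vanishes off sets of cardinality `r`). -/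
def suppOn (N r : ℕ) (V : Finset (Fin N) → ℝ) : Prop :=
  ∀ S : Finset (Fin N), S.card ≠ r → V S = 0

/-- Membership in `W_r`: supported on `Σ_r` and orthogonal to `A₊ℓ²(Σ_{r−1})`.
(For `r = 0` the orthogonality condition is vacuous, so `W_0 = ℓ²(Σ_0)`.) -/
def memW (N r : ℕ) (W : Finset (Fin N) → ℝ) : Prop :=
  suppOn N r W ∧
    ∀ U : Finset (Fin N) → ℝ, suppOn N (r - 1) U → inner' N W (Aplus N U) = 0

/-- `m(r,k) = Σ_{j=0}^{k} (N − 2(r+j))`. -/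
def mcoef (N r k : ℕ) : ℝ :=
  ∑ j ∈ Finset.range (k + 1), ((N : ℝ) - 2 * ((r : ℝ) + (j : ℝ)))

/-- Hadamard vector `H_S(R) = (−1)^{|R∩S|}`. -/
def Had (N : ℕ) (S R : Finset (Fin N)) : ℝ := (-1 : ℝ) ^ (R ∩ S).card

/-- Spatial truncation `Q_K`: restriction to the Hamming ball of radius `K`. -/
def QK (N K : ℕ) (V : Finset (Fin N) → ℝ) : Finset (Fin N) → ℝ :=
  fun S => if S.card ≤ K then V S else 0

/-- Spectral projection `P_K`: orthogonal projection onto `span{H_S : |S| ≤ K}`,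
given by `P_K V = Σ_{|S|≤K} (⟨V,H_S⟩/2^N)·H_S`. -/
noncomputable def PK (N K : ℕ) (V : Finset (Fin N) → ℝ) : Finset (Fin N) → ℝ :=
  fun R => ∑ S ∈ Finset.univ.filter (fun S : Finset (Fin N) => S.card ≤ K),
    (inner' N V (Had N S) / 2 ^ N) * Had N S R

/-- Diagonal operator `(TV)(R) = √(2|R|)·V(R)`. -/
noncomputable def Tdiag (N : ℕ) (V : Finset (Fin N) → ℝ) : Finset (Fin N) → ℝ :=
  fun R => Real.sqrt (2 * (R.card : ℝ)) * V R

/-- Boolean difference operator conjugated by the Hadamard transform: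
`HBDO = T(αI − L)T + βL`. -/
noncomputable def HBDO (N : ℕ) (α β : ℝ) (V : Finset (Fin N) → ℝ) : Finset (Fin N) → ℝ :=
  fun R => Tdiag N (fun S => α * Tdiag N V S - Lap N (Tdiag N V) S) R + β * Lap N V R

/-- Hadamard transform `(HV)(R) = Σ_S (−1)^{|R∩S|} V(S)`. -/
def Hmat (N : ℕ) (V : Finset (Fin N) → ℝ) : Finset (Fin N) → ℝ :=
  fun R => ∑ S : Finset (Fin N), Had N S R * V S

/-- Commutator `C = A₋A₊ − A₊A₋`. -/
def Cop (N : ℕ) (V : Finset (Fin N) → ℝ) : Finset (Fin N) → ℝ :=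
  fun S => Aminus N (Aplus N V) S - Aplus N (Aminus N V) S

section

variable {N : ℕ}

lemma aplus_smul (c : ℝ) (V : Finset (Fin N) → ℝ) : Aplus N (c • V) = c • Aplus N V := by
  funext S
  simp [Aplus, mul_sum]

lemma aplus_zero : Aplus N 0 = 0 := by
  simpa using aplus_smul (N := N) 0 0

lemma suppOn_aplus {r : ℕ} {V : Finset (Fin N) → ℝ} (h : suppOn N r V) :
    suppOn N (r + 1) (Aplus N V) := by
  intro S hS
  refine sum_eq_zero fun s hs => h _ ?_
  have : 1 ≤ S.card := card_pos.mpr ⟨s, hs⟩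
  rw [card_erase_of_mem hs]
  omega

lemma suppOn_iterate_aplus {r : ℕ} {V : Finset (Fin N) → ℝ} (h : suppOn N r V) (k : ℕ) :
    suppOn N (r + k) ((Aplus N)^[k] V) := by
  induction k with
  | zero => simpa using h
  | succ k ih =>
    rw [Function.iterate_succ_apply', ← Nat.add_assoc]
    exact suppOn_aplus ih

lemma suppOn_aminus {r : ℕ} {V : Finset (Fin N) → ℝ} (h : suppOn N r V) :
    suppOn N (r - 1) (Aminus N V) := by
  intro R hR
  refine sum_eq_zero fun b hb => h _ ?_
  rw [card_insert_of_notMem (mem_compl.mp hb)]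
  omega

lemma inner'_aplus (V U : Finset (Fin N) → ℝ) :
    inner' N V (Aplus N U) = inner' N (Aminus N V) U := by
  unfold inner' Aplus Aminus
  simp only [mul_sum, sum_mul]
  rw [sum_sigma', sum_sigma']
  -- the pairs `(S, s)` with `s ∈ S` correspond to the pairs `(R, b)` with `b ∉ R` via `R = S \ {s}`
  refine sum_nbij' (fun p => ⟨p.1.erase p.2, p.2⟩) (fun p => ⟨insert p.2 p.1, p.2⟩)
    ?_ ?_ ?_ ?_ ?_ <;>
  · intro p hp
    simp only [mem_sigma, mem_univ, true_and, mem_compl] at hp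
    simp [insert_erase, hp]

lemma memW.aminus_eq_zero {r : ℕ} {W : Finset (Fin N) → ℝ} (hW : memW N r W) :
    Aminus N W = 0 := by
  have h := hW.2 (Aminus N W) (suppOn_aminus hW.1)
  rw [inner'_aplus, inner', sum_eq_zero_iff_of_nonneg fun S _ => mul_self_nonneg _] at h
  funext S
  exact mul_self_eq_zero.mp (h S (mem_univ S))

lemma aplus_insert_apply (V : Finset (Fin N) → ℝ) {R : Finset (Fin N)} {b : Fin N} (hb : b ∉ R) :
    Aplus N V (insert b R) = V R + ∑ s ∈ R, V (insert b (R.erase s)) := by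
  rw [Aplus, sum_insert hb, erase_insert hb]
  congr 1
  refine sum_congr rfl fun s hs => ?_
  rw [erase_insert_of_ne (by rintro rfl; exact hb hs)]

lemma aminus_erase_apply (V : Finset (Fin N) → ℝ) {R : Finset (Fin N)} {s : Fin N} (hs : s ∈ R) :
    Aminus N V (R.erase s) = V R + ∑ b ∈ Rᶜ, V (insert b (R.erase s)) := by
  have hcompl : (R.erase s)ᶜ = insert s Rᶜ := by
    ext x
    by_cases hx : x = s <;> simp [hx, hs]
  rw [Aminus, hcompl, sum_insert (by simpa using hs), insert_erase hs]

lemma aminus_aplus_apply (V : Finset (Fin N) → ℝ) (R : Finset (Fin N)) :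
    Aminus N (Aplus N V) R = Aplus N (Aminus N V) R + ((N : ℝ) - 2 * R.card) * V R := by
  have hcard : (Rᶜ.card : ℝ) + R.card = N := by
    exact_mod_cast (card_compl_add_card R).trans (Fintype.card_fin N)
  rw [Aminus, Aplus, sum_congr rfl fun b hb => aplus_insert_apply V (mem_compl.mp hb),
    sum_congr rfl fun s hs => aminus_erase_apply V hs, sum_add_distrib,
    sum_add_distrib, sum_comm (s := Rᶜ), sum_const, sum_const,
    nsmul_eq_mul, nsmul_eq_mul]
  linear_combination V R * hcard

lemma aminus_aplus_of_suppOn {n : ℕ} {V : Finset (Fin N) → ℝ} (h : suppOn N n V) :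
    Aminus N (Aplus N V) = Aplus N (Aminus N V) + ((N : ℝ) - 2 * n) • V := by
  funext S
  rw [aminus_aplus_apply, Pi.add_apply, Pi.smul_apply, smul_eq_mul]
  by_cases hS : S.card = n
  · rw [hS]
  · rw [h S hS, mul_zero, mul_zero]

lemma mcoef_succ (r k : ℕ) :
    mcoef N r (k + 1) = mcoef N r k + ((N : ℝ) - 2 * (r + (k + 1 : ℕ))) :=
  sum_range_succ _ _

end

theorem aminus_aplus_pow_general (N r k : ℕ)
    (W : Finset (Fin N) → ℝ) (hW : memW N r W) :
    Aminus N ((Aplus N)^[k + 1] W) = mcoef N r k • (Aplus N)^[k] W := by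
  induction k with
  | zero =>
    rw [Function.iterate_one, Function.iterate_zero_apply, aminus_aplus_of_suppOn hW.1,
      hW.aminus_eq_zero, aplus_zero, zero_add]
    simp [mcoef]
  | succ k ih =>
    rw [Function.iterate_succ_apply' _ (k + 1),
      aminus_aplus_of_suppOn (suppOn_iterate_aplus hW.1 (k + 1)), ih, aplus_smul,
      ← Function.iterate_succ_apply' (Aplus N) k, mcoef_succ, add_smul, Nat.cast_add]

/-- for `W ∈ W_r` and `r + k < N`, `A₋A₊^{k+1}W = m(r,k)·A₊^{k}W`. -/
theorem aminus_aplus_pow (N r k : ℕ) (hN : 1 ≤ N) (hrk : r + k < N)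
    (W : Finset (Fin N) → ℝ) (hW : memW N r W) :
    Aminus N ((Aplus N)^[k + 1] W) = mcoef N r k • (Aplus N)^[k] W :=
  aminus_aplus_pow_general N r k W hW
end

section
/- Let 0 ≤ r ≤ N and let V_r denote the linear span of the set of vertex functions {A₊^{k}W : W ∈ W_r, 0 ≤ k ≤ N−r}. Then both A₊ and A₋ map V_r into itself; consequently A = A₊ + A₋ and every polynomial in A map V_r into itself. -/
open Finset

/-- `A₊` as a linear endomorphism of the space of vertex functions. -/
def AplusL (N : ℕ) : Module.End ℝ (Finset (Fin N) → ℝ) where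
  toFun := Aplus N
  map_add' V U := by
    funext S
    simp [Aplus, Finset.sum_add_distrib]
  map_smul' c V := by
    funext S
    simp [Aplus, Finset.mul_sum]

/-- `A₋` as a linear endomorphism of the space of vertex functions. -/
def AminusL (N : ℕ) : Module.End ℝ (Finset (Fin N) → ℝ) where
  toFun := Aminus N
  map_add' V U := by
    funext S
    simp [Aminus, Finset.sum_add_distrib]
  map_smul' c V := by
    funext S
    simp [Aminus, Finset.mul_sum]

/-- The adjacency operator `A = A₊ + A₋` as a linear endomorphism. -/
def AL (N : ℕ) : Module.End ℝ (Finset (Fin N) → ℝ) := AplusL N + AminusL N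

lemma suppOn_Aplus {N s : ℕ} {V : Finset (Fin N) → ℝ} (h : suppOn N s V) :
    suppOn N (s + 1) (Aplus N V) := by
  intro S hS
  refine Finset.sum_eq_zero fun x hx => h _ ?_
  have h1 : 1 ≤ S.card := Finset.card_pos.mpr ⟨x, hx⟩
  rw [Finset.card_erase_of_mem hx]
  omega

lemma suppOn_iter {N r : ℕ} {W : Finset (Fin N) → ℝ} (h : suppOn N r W) (k : ℕ) :
    suppOn N (r + k) ((Aplus N)^[k] W) := by
  induction k with
  | zero => exact h
  | succ k ih =>
    rw [Function.iterate_succ_apply']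
    exact suppOn_Aplus ih

lemma eq_zero_of_suppOn_gt {N s : ℕ} {V : Finset (Fin N) → ℝ} (h : suppOn N s V)
    (hs : N < s) : V = 0 := by
  funext S
  have h2 := Finset.card_le_univ S
  rw [Fintype.card_fin] at h2
  exact h S (by omega)

lemma adjoint (N : ℕ) (V U : Finset (Fin N) → ℝ) :
    inner' N V (Aplus N U) = inner' N (Aminus N V) U := by
  unfold inner' Aplus Aminus
  simp_rw [Finset.mul_sum, Finset.sum_mul]
  have e1 : (∑ x : Finset (Fin N), ∑ i ∈ x, V x * U (x.erase i))
      = ∑ p ∈ (Finset.univ.sigma fun S : Finset (Fin N) => S), V p.1 * U (p.1.erase p.2) :=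
    (Finset.sum_sigma Finset.univ (fun S => S) (fun p => V p.1 * U (p.1.erase p.2))).symm
  have e2 : (∑ x : Finset (Fin N), ∑ i ∈ xᶜ, V (insert i x) * U x)
      = ∑ p ∈ (Finset.univ.sigma fun R : Finset (Fin N) => Rᶜ), V (insert p.2 p.1) * U p.1 :=
    (Finset.sum_sigma Finset.univ (fun R => Rᶜ) (fun p => V (insert p.2 p.1) * U p.1)).symm
  rw [e1, e2]
  refine Finset.sum_nbij' (fun p => ⟨p.1.erase p.2, p.2⟩) (fun p => ⟨insert p.2 p.1, p.2⟩)
    ?_ ?_ ?_ ?_ ?_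
  · rintro ⟨S, s⟩ hp
    simp only [Finset.mem_sigma, Finset.mem_univ, true_and] at hp ⊢
    simp [Finset.mem_compl]
  · rintro ⟨R, b⟩ hp
    simp only [Finset.mem_sigma, Finset.mem_univ, true_and, Finset.mem_compl] at hp ⊢
    simp
  · rintro ⟨S, s⟩ hp
    simp only [Finset.mem_sigma, Finset.mem_univ, true_and] at hp
    simp [Finset.insert_erase hp]
  · rintro ⟨R, b⟩ hp
    simp only [Finset.mem_sigma, Finset.mem_univ, true_and, Finset.mem_compl] at hp
    simp [Finset.erase_insert hp]
  · rintro ⟨S, s⟩ hp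
    simp only [Finset.mem_sigma, Finset.mem_univ, true_and] at hp
    rw [Finset.insert_erase hp]

lemma Aminus_memW_eq_zero {N r : ℕ} {W : Finset (Fin N) → ℝ} (hW : memW N r W) :
    Aminus N W = 0 := by
  funext R
  by_cases hcard : R.card + 1 = r
  · have hsupp : suppOn N (r - 1) (fun S => if S = R then (1:ℝ) else 0) := by
      intro S hS
      have : S ≠ R := by rintro rfl; omega
      simp [this]
    have h0 := hW.2 _ hsupp
    rw [adjoint] at h0
    unfold inner' at h0
    simpa [Finset.sum_ite_eq'] using h0
  · refine Finset.sum_eq_zero fun b hb => ?_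
    rw [Finset.mem_compl] at hb
    exact hW.1 _ (by rw [Finset.card_insert_of_notMem hb]; omega)

lemma Aplus_zero (N : ℕ) : Aplus N 0 = 0 := by
  funext S; simp [Aplus]

lemma Aplus_smulfun (N : ℕ) (c : ℝ) (V : Finset (Fin N) → ℝ) :
    Aplus N (fun S => c * V S) = fun S => c * Aplus N V S := by
  funext S; simp [Aplus, Finset.mul_sum]

lemma commutator' (N : ℕ) (V : Finset (Fin N) → ℝ) (R : Finset (Fin N)) :
    Aminus N (Aplus N V) R - Aplus N (Aminus N V) R
      = ((N : ℝ) - 2 * (R.card : ℝ)) * V R := by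
  have hcomplcard : (Rᶜ : Finset (Fin N)).card = N - R.card := by
    rw [Finset.card_compl, Fintype.card_fin]
  have hRcard : R.card ≤ N := by
    have h2 := Finset.card_le_univ R
    rw [Fintype.card_fin] at h2
    exact h2
  have e1 : Aminus N (Aplus N V) R
      = ((N : ℝ) - R.card) * V R + ∑ b ∈ Rᶜ, ∑ s ∈ R, V (insert b (R.erase s)) := by
    unfold Aminus Aplus
    have : ∀ b ∈ Rᶜ, ∑ s ∈ insert b R, V ((insert b R).erase s)
        = V R + ∑ s ∈ R, V (insert b (R.erase s)) := by
      intro b hb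
      rw [Finset.mem_compl] at hb
      rw [Finset.sum_insert hb, Finset.erase_insert hb]
      congr 1
      refine Finset.sum_congr rfl fun s hs => ?_
      have hsb : s ≠ b := fun h => hb (h ▸ hs)
      rw [Finset.erase_insert_of_ne hsb.symm]
    rw [Finset.sum_congr rfl this, Finset.sum_add_distrib, Finset.sum_const, hcomplcard]
    rw [nsmul_eq_mul, Nat.cast_sub hRcard]
  have e2 : Aplus N (Aminus N V) R
      = (R.card : ℝ) * V R + ∑ s ∈ R, ∑ b ∈ Rᶜ, V (insert b (R.erase s)) := by
    unfold Aplus Aminus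
    have : ∀ s ∈ R, ∑ b ∈ (R.erase s)ᶜ, V (insert b (R.erase s))
        = V R + ∑ b ∈ Rᶜ, V (insert b (R.erase s)) := by
      intro s hs
      have hs' : s ∉ (Rᶜ : Finset (Fin N)) := by simp [hs]
      rw [Finset.compl_erase, Finset.sum_insert hs', Finset.insert_erase hs]
    rw [Finset.sum_congr rfl this, Finset.sum_add_distrib, Finset.sum_const, nsmul_eq_mul]
  rw [e1, e2, Finset.sum_comm]
  ring

lemma Aminus_iter {N r : ℕ} {W : Finset (Fin N) → ℝ} (hW : memW N r W) (k : ℕ) :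
    Aminus N ((Aplus N)^[k + 1] W) = fun S => mcoef N r k * (Aplus N)^[k] W S := by
  induction k with
  | zero =>
    funext S
    have h0 : Aminus N W = 0 := Aminus_memW_eq_zero hW
    have hc := commutator' N W S
    rw [h0, Aplus_zero] at hc
    simp only [Pi.zero_apply, sub_zero] at hc
    show Aminus N (Aplus N W) S = mcoef N r 0 * W S
    rw [hc]
    by_cases hWS : W S = 0
    · rw [hWS]; ring
    · have : S.card = r := by
        by_contra h; exact hWS (hW.1 S h)
      rw [this]
      simp [mcoef]
  | succ k ih =>
    funext S
    have hc := commutator' N ((Aplus N)^[k + 1] W) S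
    rw [ih, Aplus_smulfun] at hc
    simp only [] at hc
    have hit : (Aplus N)^[k + 1 + 1] W = Aplus N ((Aplus N)^[k + 1] W) :=
      Function.iterate_succ_apply' _ _ _
    have hit2 : (Aplus N)^[k + 1] W = Aplus N ((Aplus N)^[k] W) :=
      Function.iterate_succ_apply' _ _ _
    rw [hit]
    have : Aminus N (Aplus N ((Aplus N)^[k+1] W)) S
        = mcoef N r k * Aplus N ((Aplus N)^[k] W) S
          + ((N : ℝ) - 2 * (S.card : ℝ)) * (Aplus N)^[k+1] W S := by linarith
    rw [this, ← hit2]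
    by_cases hWS : (Aplus N)^[k+1] W S = 0
    · rw [hWS]; ring
    · have hcard : S.card = r + (k + 1) := by
        by_contra h; exact hWS (suppOn_iter hW.1 (k + 1) S h)
      rw [hcard]
      have : mcoef N r (k + 1) = mcoef N r k + ((N : ℝ) - 2 * ((r : ℝ) + (k + 1 : ℕ))) := by
        rw [mcoef, Finset.sum_range_succ]; rfl
      rw [this]
      push_cast
      ring


lemma Aplus_add (N : ℕ) (V U : Finset (Fin N) → ℝ) :
    Aplus N (V + U) = Aplus N V + Aplus N U := by
  funext S; simp [Aplus, Finset.sum_add_distrib]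

lemma Aplus_smul (N : ℕ) (c : ℝ) (V : Finset (Fin N) → ℝ) :
    Aplus N (c • V) = c • Aplus N V := by
  funext S; simp [Aplus, Finset.mul_sum]

lemma Aminus_add (N : ℕ) (V U : Finset (Fin N) → ℝ) :
    Aminus N (V + U) = Aminus N V + Aminus N U := by
  funext S; simp [Aminus, Finset.sum_add_distrib]

lemma Aminus_smul (N : ℕ) (c : ℝ) (V : Finset (Fin N) → ℝ) :
    Aminus N (c • V) = c • Aminus N V := by
  funext S; simp [Aminus, Finset.mul_sum]

lemma Aminus_zero (N : ℕ) : Aminus N 0 = 0 := by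
  funext S; simp [Aminus]

/-- the span `V_r` of `{A₊^k W : W ∈ W_r, 0 ≤ k ≤ N−r}` is invariant
under `A₊`, `A₋`, hence under `A = A₊ + A₋` and every polynomial in `A`. -/
theorem Vr_invariance (N r : ℕ) (hN : 1 ≤ N) (hr : r ≤ N) :
    let Vr : Submodule ℝ (Finset (Fin N) → ℝ) := Submodule.span ℝ
      {V | ∃ W k, memW N r W ∧ k ≤ N - r ∧ V = (Aplus N)^[k] W}
    (∀ V ∈ Vr, Aplus N V ∈ Vr) ∧ (∀ V ∈ Vr, Aminus N V ∈ Vr) ∧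
    (∀ V ∈ Vr, Adj N V ∈ Vr) ∧
    (∀ p : Polynomial ℝ, ∀ V ∈ Vr, Polynomial.aeval (AL N) p V ∈ Vr) := by
  intro Vr
  have hgen : ∀ W k, memW N r W → k ≤ N - r → (Aplus N)^[k] W ∈ Vr := fun W k hW hk =>
    Submodule.subset_span ⟨W, k, hW, hk, rfl⟩
  have hAplus : ∀ V ∈ Vr, Aplus N V ∈ Vr := by
    intro V hV
    induction hV using Submodule.span_induction with
    | mem x hx =>
      obtain ⟨W, k, hW, hk, rfl⟩ := hx
      have hstep : Aplus N ((Aplus N)^[k] W) = (Aplus N)^[k + 1] W :=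
        (Function.iterate_succ_apply' _ _ _).symm
      rw [hstep]
      by_cases hk' : k + 1 ≤ N - r
      · exact hgen W (k + 1) hW hk'
      · have hz : (Aplus N)^[k + 1] W = 0 :=
          eq_zero_of_suppOn_gt (suppOn_iter hW.1 (k + 1)) (by omega)
        rw [hz]; exact Vr.zero_mem
    | zero => rw [Aplus_zero]; exact Vr.zero_mem
    | add x y _ _ hx hy => rw [Aplus_add]; exact Vr.add_mem hx hy
    | smul c x _ hx => rw [Aplus_smul]; exact Vr.smul_mem c hx
  have hAminus : ∀ V ∈ Vr, Aminus N V ∈ Vr := by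
    intro V hV
    induction hV using Submodule.span_induction with
    | mem x hx =>
      obtain ⟨W, k, hW, hk, rfl⟩ := hx
      match k with
      | 0 =>
        have : (Aplus N)^[0] W = W := rfl
        rw [this, Aminus_memW_eq_zero hW]
        exact Vr.zero_mem
      | (j + 1) =>
        rw [Aminus_iter hW j]
        have : (fun S => mcoef N r j * (Aplus N)^[j] W S)
            = mcoef N r j • (Aplus N)^[j] W := rfl
        rw [this]
        exact Vr.smul_mem _ (hgen W j hW (by omega))
    | zero => rw [Aminus_zero]; exact Vr.zero_mem
    | add x y _ _ hx hy => rw [Aminus_add]; exact Vr.add_mem hx hy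
    | smul c x _ hx => rw [Aminus_smul]; exact Vr.smul_mem c hx
  have hAdj : ∀ V ∈ Vr, Adj N V ∈ Vr := by
    intro V hV
    have : Adj N V = Aplus N V + Aminus N V := rfl
    rw [this]
    exact Vr.add_mem (hAplus V hV) (hAminus V hV)
  refine ⟨hAplus, hAminus, hAdj, ?_⟩
  have hAL : ∀ V ∈ Vr, AL N V ∈ Vr := by
    intro V hV
    have : AL N V = Aplus N V + Aminus N V := rfl
    rw [this]
    exact Vr.add_mem (hAplus V hV) (hAminus V hV)
  have hpow : ∀ n : ℕ, ∀ V ∈ Vr, ((AL N) ^ n) V ∈ Vr := by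
    intro n
    induction n with
    | zero => intro V hV; simpa using hV
    | succ n ih =>
      intro V hV
      rw [pow_succ, Module.End.mul_apply]
      exact ih _ (hAL V hV)
  intro p
  induction p using Polynomial.induction_on' with
  | add p q hp hq =>
    intro V hV
    rw [map_add, LinearMap.add_apply]
    exact Vr.add_mem (hp V hV) (hq V hV)
  | monomial n a =>
    intro V hV
    rw [Polynomial.aeval_monomial, Module.End.mul_apply, Module.algebraMap_end_apply]
    exact Vr.smul_mem _ (hpow n V hV)
end
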